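/- arXiv:0907.5137 — 4 statements merged into one kernel-verified Lean document; each statement's English description precedes it below -/
import Mathlib

section
/- For all binary strings X, Y ∈ {0,1}^n, the LCS length of X and Y equals the maximum, over all admissible vectors v ∈ V, of the score |v| + Σ_{i=1}^{|v|} S_v(i) + r_v (the empty vector is admissible, with score equal to the minimum of the number of zeros in X and the number of zeros in Y). -/
open scoped BigOperators
open Classical

noncomputable section

/-- Length of a longest common subsequence of two boolean lists. -/
def lcsLen (x y : List Bool) : ℕ :=
  sSup {k : ℕ | ∃ z : List Bool, z.length = k ∧ z.Sublist x ∧ z.Sublist y}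

/-- Number of zeros of x among positions a, a+1, …, b. -/
def zeroCount (x : ℕ → Bool) (a b : ℕ) : ℕ :=
  ((Finset.Icc a b).filter fun i => x i = false).card

/-- The pair (s, t) is a candidate next pair of matched ones after (p, q), for the
zero-difference u: p < s ≤ n, q < t ≤ n, X_s = Y_t = 1, and
(#zeros of X in [p+1, s]) − (#zeros of Y in [q+1, t]) = u. -/
def StepProp (x y : ℕ → Bool) (n : ℕ) (u : ℤ) (p q s t : ℕ) : Prop :=
  p < s ∧ q < t ∧ s ≤ n ∧ t ≤ n ∧ x s = true ∧ y t = true ∧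
    (zeroCount x (p + 1) s : ℤ) - (zeroCount y (q + 1) t : ℤ) = u

/-- π, ν realize the alignment associated with the vector v: π(0) = ν(0) = 0 and
(π(i+1), ν(i+1)) is the lexicographically smallest candidate pair after (π(i), ν(i)) for the
zero-difference v_{i+1}.  `v` is admissible iff such π, ν exist. -/
def IsAlignment (x y : ℕ → Bool) (n : ℕ) (v : List ℤ) (piF nuF : ℕ → ℕ) : Prop :=
  piF 0 = 0 ∧ nuF 0 = 0 ∧
    ∀ i : ℕ, ∀ hi : i < v.length,
      StepProp x y n (v.get ⟨i, hi⟩) (piF i) (nuF i) (piF (i + 1)) (nuF (i + 1)) ∧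
      ∀ s t : ℕ, StepProp x y n (v.get ⟨i, hi⟩) (piF i) (nuF i) s t →
        piF (i + 1) < s ∨ (piF (i + 1) = s ∧ nuF (i + 1) ≤ t)

/-- The score of the alignment v (realized by π, ν): one matched pair of ones per cell, the
maximal number of matched zeros in each cell, plus the matched zeros after the last cell. -/
def score (x y : ℕ → Bool) (n : ℕ) (v : List ℤ) (piF nuF : ℕ → ℕ) : ℕ :=
  v.length +
    (∑ i ∈ Finset.range v.length,
      min (zeroCount x (piF i + 1) (piF (i + 1))) (zeroCount y (nuF i + 1) (nuF (i + 1)))) +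
    min (zeroCount x (piF v.length + 1) n) (zeroCount y (nuF v.length + 1) n)

/-- LCS length of the strings (x 1, …, x n) and (y 1, …, y n). -/
def lcsN (x y : ℕ → Bool) (n : ℕ) : ℕ :=
  lcsLen (List.ofFn fun i : Fin n => x (i.val + 1)) (List.ofFn fun i : Fin n => y (i.val + 1))

/-!
Cut a common subsequence of X and Y after each of its ones: it becomes blocks `0^c 1` followed
by a block of zeros. Embedding the blocks in X and Y yields a chain of matched pairs of ones whose
zero differences form a vector `v` and whose score is at least the length of the subsequence;
conversely, every chain of `v` carries a common subsequence as long as its score.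

The lexicographically greedy chain of `v` stays coordinatewise below any chain of `v` with the same
zero difference, so it exists and is the alignment of `v`. A cell with zero difference `vᵢ`
contributes `min a b = a - max vᵢ 0`, and the `a`'s telescope, so the score of a chain depends only
on `v` and its final zero difference: the greedy alignment scores as much as the given chain.
-/

def subword (x : ℕ → Bool) (a b : ℕ) : List Bool := (List.range' (a + 1) (b - a)).map x

theorem List.Sublist.exists_eq_append_cons {α : Type*} {l₁ l₂ r : List α} {b : α}
    (h : (l₁ ++ b :: l₂).Sublist r) :
    ∃ r₁ r₂, r = r₁ ++ b :: r₂ ∧ l₁.Sublist r₁ ∧ l₂.Sublist r₂ := by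
  obtain ⟨s₁, s₂, rfl, h₁, hs₂⟩ := List.append_sublist_iff.mp h
  obtain ⟨t₁, t₂, rfl, hb, h₂⟩ := List.cons_sublist_iff.mp hs₂
  obtain ⟨u, w, rfl⟩ := List.append_of_mem hb
  exact ⟨s₁ ++ u, w ++ t₂, by simp, h₁.trans (List.sublist_append_left _ _),
    h₂.trans (List.sublist_append_right _ _)⟩

section Subword

variable (x : ℕ → Bool)

theorem count_false_subword (a b : ℕ) :
    (subword x a b).count false = zeroCount x (a + 1) b := by
  rw [zeroCount, Nat.Icc_eq_range', Nat.add_sub_add_right, subword, List.count_eq_countP,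
    List.countP_map]
  simp [Finset.filter, Finset.card, List.countP_eq_length_filter, Function.comp_def]

theorem subword_append {a b c : ℕ} (hab : a ≤ b) (hbc : b ≤ c) :
    subword x a b ++ subword x b c = subword x a c := by
  have h := List.range'_append (s := a + 1) (m := b - a) (n := c - b) (step := 1)
  rw [one_mul, show a + 1 + (b - a) = b + 1 by omega, show b - a + (c - b) = c - a by omega] at h
  rw [subword, subword, subword, ← List.map_append, h]

theorem subword_succ {a b : ℕ} (hab : a ≤ b) :
    subword x a (b + 1) = subword x a b ++ [x (b + 1)] := by
  rw [← subword_append x hab b.le_succ]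
  simp [subword]

theorem zeroCount_add {a b c : ℕ} (hab : a ≤ b) (hbc : b ≤ c) :
    zeroCount x (a + 1) b + zeroCount x (b + 1) c = zeroCount x (a + 1) c := by
  simp only [← count_false_subword, ← subword_append x hab hbc, List.count_append]

theorem zeroCount_one_add {p s : ℕ} (hps : p ≤ s) :
    zeroCount x 1 p + zeroCount x (p + 1) s = zeroCount x 1 s :=
  zeroCount_add x p.zero_le hps

theorem zeroCount_mono {a b c : ℕ} (hbc : b ≤ c) : zeroCount x a b ≤ zeroCount x a c :=
  Finset.card_le_card (Finset.filter_subset_filter _ (Finset.Icc_subset_Icc_right hbc))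

theorem subword_eq_append_cons {a n : ℕ} {r₁ r₂ : List Bool} {b : Bool}
    (h : subword x a n = r₁ ++ b :: r₂) :
    ∃ p, a < p ∧ p ≤ n ∧ x p = b ∧ subword x a p = r₁ ++ [b] ∧ r₂ = subword x p n := by
  obtain ⟨l₁, l₂, hl, rfl, hl₂⟩ := List.map_eq_append_iff.mp h
  obtain ⟨p, l₃, rfl, rfl, rfl⟩ := List.map_eq_cons_iff.mp hl₂
  obtain ⟨k, -, rfl, hl₃⟩ := List.range'_eq_append_iff.mp hl
  obtain ⟨rfl, hk, rfl⟩ := List.range'_eq_cons_iff.mp hl₃.symm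
  rw [mul_one]
  refine ⟨a + 1 + k, by omega, by omega, rfl, ?_, ?_⟩
  · simp [subword, show a + 1 + k - a = k + 1 by omega, List.range'_concat]
  · simp [subword, show n - (a + 1 + k) = n - a - k - 1 by omega]

theorem exists_true_of_sublist_subword {a n c : ℕ} {z : List Bool}
    (h : (List.replicate c false ++ true :: z).Sublist (subword x a n)) :
    ∃ p, a < p ∧ p ≤ n ∧ x p = true ∧ c ≤ zeroCount x (a + 1) p ∧ z.Sublist (subword x p n) := by
  obtain ⟨r₁, r₂, hr, hc, hz⟩ := h.exists_eq_append_cons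
  obtain ⟨p, hap, hpn, hp, hsub, rfl⟩ := subword_eq_append_cons x hr
  refine ⟨p, hap, hpn, hp, ?_, hz⟩
  rw [← count_false_subword, hsub, List.count_append]
  exact (List.replicate_sublist_iff.mp hc).trans (Nat.le_add_right _ _)

theorem replicate_false_append_true_sublist {a p c : ℕ} (hap : a < p) (hp : x p = true)
    (hc : c ≤ zeroCount x (a + 1) p) :
    (List.replicate c false ++ [true]).Sublist (subword x a p) := by
  obtain ⟨b, rfl⟩ := Nat.exists_eq_add_of_lt hap
  rw [subword_succ x (by omega), hp]
  rw [← count_false_subword, subword_succ x (by omega), hp, List.count_append] at hc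
  exact (List.replicate_sublist_iff.mpr (by simpa using hc)).append (List.Sublist.refl _)

end Subword

theorem bddAbove_commonSublist_lengths (l₁ l₂ : List Bool) :
    BddAbove {k : ℕ | ∃ z : List Bool, z.length = k ∧ z.Sublist l₁ ∧ z.Sublist l₂} :=
  ⟨l₁.length, fun _ ⟨_, hk, hz, _⟩ => hk ▸ hz.length_le⟩

theorem le_lcsLen {l₁ l₂ z : List Bool} (h₁ : z.Sublist l₁) (h₂ : z.Sublist l₂) :
    z.length ≤ lcsLen l₁ l₂ :=
  le_csSup (bddAbove_commonSublist_lengths l₁ l₂) ⟨z, rfl, h₁, h₂⟩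

theorem exists_sublist_length_eq_lcsLen (l₁ l₂ : List Bool) :
    ∃ z : List Bool, z.length = lcsLen l₁ l₂ ∧ z.Sublist l₁ ∧ z.Sublist l₂ := by
  refine Nat.sSup_mem ?_ (bddAbove_commonSublist_lengths l₁ l₂)
  exact ⟨0, [], rfl, List.nil_sublist _, List.nil_sublist _⟩

theorem lcsN_eq_lcsLen_subword (x y : ℕ → Bool) (n : ℕ) :
    lcsN x y n = lcsLen (subword x 0 n) (subword y 0 n) := by
  have h (x : ℕ → Bool) : (List.ofFn fun i : Fin n => x (i.val + 1)) = subword x 0 n :=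
    List.ext_getElem (by simp [subword]) fun i _ _ => by simp [subword, add_comm]
  rw [lcsN, h, h]

def IsStepChain (x y : ℕ → Bool) (n : ℕ) (v : List ℤ) (piF nuF : ℕ → ℕ) : Prop :=
  ∀ i < v.length, StepProp x y n (v.getD i 0) (piF i) (nuF i) (piF (i + 1)) (nuF (i + 1))

theorem IsAlignment.isStepChain {x y : ℕ → Bool} {n : ℕ} {v : List ℤ} {piF nuF : ℕ → ℕ}
    (h : IsAlignment x y n v piF nuF) : IsStepChain x y n v piF nuF :=
  fun i hi => by
    have hget : v.getD i 0 = v.get ⟨i, hi⟩ := List.getD_eq_get v 0 ⟨i, hi⟩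
    exact hget ▸ (h.2.2 i hi).1

namespace IsStepChain

variable {x y : ℕ → Bool} {n : ℕ} {v : List ℤ} {piF nuF : ℕ → ℕ}

theorem apply_le (h : IsStepChain x y n v piF nuF) (h0 : piF 0 = 0) (h0' : nuF 0 = 0) {k : ℕ}
    (hk : k ≤ v.length) : piF k ≤ n ∧ nuF k ≤ n := by
  cases k with
  | zero => simp [h0, h0']
  | succ k => exact ⟨(h k hk).2.2.1, (h k hk).2.2.2.1⟩

theorem exists_sublist (h : IsStepChain x y n v piF nuF) :
    ∀ k ≤ v.length, ∃ w : List Bool,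
      w.length = k + ∑ i ∈ Finset.range k,
        min (zeroCount x (piF i + 1) (piF (i + 1))) (zeroCount y (nuF i + 1) (nuF (i + 1))) ∧
      w.Sublist (subword x 0 (piF k)) ∧ w.Sublist (subword y 0 (nuF k)) := by
  intro k
  induction k with
  | zero => exact fun _ => ⟨[], rfl, List.nil_sublist _, List.nil_sublist _⟩
  | succ k ih =>
    intro hk
    obtain ⟨w, hw, hwx, hwy⟩ := ih (by omega)
    obtain ⟨hps, hqt, -, -, hxs, hyt, -⟩ := h k hk
    set c := min (zeroCount x (piF k + 1) (piF (k + 1))) (zeroCount y (nuF k + 1) (nuF (k + 1)))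
    refine ⟨w ++ (List.replicate c false ++ [true]), ?_, ?_, ?_⟩
    · simp only [List.length_append, hw, List.length_replicate, List.length_cons,
        List.length_nil, zero_add, Finset.sum_range_succ]
      omega
    · rw [← subword_append x (Nat.zero_le _) hps.le]
      exact hwx.append (replicate_false_append_true_sublist x hps hxs (min_le_left _ _))
    · rw [← subword_append y (Nat.zero_le _) hqt.le]
      exact hwy.append (replicate_false_append_true_sublist y hqt hyt (min_le_right _ _))

theorem score_le_lcsN (h : IsStepChain x y n v piF nuF) (h0 : piF 0 = 0) (h0' : nuF 0 = 0) :
    score x y n v piF nuF ≤ lcsN x y n := by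
  obtain ⟨w, hw, hwx, hwy⟩ := h.exists_sublist v.length le_rfl
  obtain ⟨hpn, hqn⟩ := h.apply_le h0 h0' le_rfl
  set r := min (zeroCount x (piF v.length + 1) n) (zeroCount y (nuF v.length + 1) n)
  have hrx : (List.replicate r false).Sublist (subword x (piF v.length) n) := by
    rw [List.replicate_sublist_iff, count_false_subword]; exact min_le_left _ _
  have hry : (List.replicate r false).Sublist (subword y (nuF v.length) n) := by
    rw [List.replicate_sublist_iff, count_false_subword]; exact min_le_right _ _
  rw [lcsN_eq_lcsLen_subword, ← subword_append x (Nat.zero_le _) hpn,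
    ← subword_append y (Nat.zero_le _) hqn]
  calc score x y n v piF nuF = (w ++ List.replicate r false).length := by simp [score, hw, r]
    _ ≤ _ := le_lcsLen (hwx.append hrx) (hwy.append hry)

end IsStepChain

def seqCons (a : ℕ) (f : ℕ → ℕ) : ℕ → ℕ
  | 0 => a
  | i + 1 => f i

section Cons

variable {x y : ℕ → Bool} {n : ℕ} {v : List ℤ} {piF nuF : ℕ → ℕ} {u : ℤ} {a b : ℕ}

theorem IsStepChain.cons (hst : StepProp x y n u a b (piF 0) (nuF 0))
    (h : IsStepChain x y n v piF nuF) :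
    IsStepChain x y n (u :: v) (seqCons a piF) (seqCons b nuF)
  | 0, _ => hst
  | i + 1, hi => h i (Nat.lt_of_succ_lt_succ hi)

theorem score_cons :
    score x y n (u :: v) (seqCons a piF) (seqCons b nuF) =
      score x y n v piF nuF + 1 +
        min (zeroCount x (a + 1) (piF 0)) (zeroCount y (b + 1) (nuF 0)) := by
  simp only [score, List.length_cons, Finset.sum_range_succ', seqCons]
  ring

end Cons

theorem exists_isStepChain_of_sublist (x y : ℕ → Bool) (n : ℕ) (z : List Bool) (a b c : ℕ)
    (hx : (List.replicate c false ++ z).Sublist (subword x a n))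
    (hy : (List.replicate c false ++ z).Sublist (subword y b n)) :
    ∃ (v : List ℤ) (piF nuF : ℕ → ℕ), piF 0 = a ∧ nuF 0 = b ∧
      IsStepChain x y n v piF nuF ∧ c + z.length ≤ score x y n v piF nuF := by
  induction z generalizing a b c with
  | nil =>
    refine ⟨[], fun _ => a, fun _ => b, rfl, rfl, fun _ hi => absurd hi (Nat.not_lt_zero _), ?_⟩
    rw [List.append_nil, List.replicate_sublist_iff, count_false_subword] at hx hy
    simpa [score] using le_min hx hy
  | cons bit z ih =>
    cases bit with
    | false =>
      have hrep : List.replicate c false ++ false :: z = List.replicate (c + 1) false ++ z := by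
        simp [List.replicate_succ']
      rw [hrep] at hx hy
      obtain ⟨v, piF, nuF, h0, h0', h, hle⟩ := ih a b (c + 1) hx hy
      exact ⟨v, piF, nuF, h0, h0', h, by simp only [List.length_cons]; omega⟩
    | true =>
      obtain ⟨p, hap, hpn, hxp, hcp, hzx⟩ := exists_true_of_sublist_subword x hx
      obtain ⟨q, hbq, hqn, hyq, hcq, hzy⟩ := exists_true_of_sublist_subword y hy
      obtain ⟨v, piF, nuF, rfl, rfl, h, hle⟩ := ih p q 0 (by simpa using hzx) (by simpa using hzy)
      have hst : StepProp x y n _ a b (piF 0) (nuF 0) := ⟨hap, hbq, hpn, hqn, hxp, hyq, rfl⟩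
      refine ⟨_ :: v, _, _, rfl, rfl, h.cons hst, ?_⟩
      rw [score_cons]
      simp only [List.length_cons]
      have := le_min hcp hcq
      omega

def zeroDiff (x y : ℕ → Bool) (p q : ℕ) : ℤ := (zeroCount x 1 p : ℤ) - zeroCount y 1 q

namespace StepProp

variable {x y : ℕ → Bool} {n : ℕ} {u : ℤ} {p q s t : ℕ}

theorem zeroDiff_eq (h : StepProp x y n u p q s t) : zeroDiff x y s t = zeroDiff x y p q + u := by
  obtain ⟨hps, hqt, -, -, -, -, hu⟩ := h
  have := zeroCount_one_add x hps.le
  have := zeroCount_one_add y hqt.le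
  simp only [zeroDiff]
  omega

theorem of_le_of_zeroDiff_eq {p' q' : ℕ} (hp : p ≤ p') (hq : q ≤ q')
    (hD : zeroDiff x y p q = zeroDiff x y p' q') (h : StepProp x y n u p' q' s t) :
    StepProp x y n u p q s t := by
  have hD' := h.zeroDiff_eq
  obtain ⟨hps, hqt, hsn, htn, hxs, hyt, -⟩ := h
  refine ⟨by omega, by omega, hsn, htn, hxs, hyt, ?_⟩
  have := zeroCount_one_add x (show p ≤ s by omega)
  have := zeroCount_one_add y (show q ≤ t by omega)
  simp only [zeroDiff] at hD hD'
  omega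

end StepProp

def nextStep (x y : ℕ → Bool) (n : ℕ) (u : ℤ) (p q : ℕ) : ℕ × ℕ :=
  if h : ∃ s t, StepProp x y n u p q s t then (Nat.find h, Nat.find (Nat.find_spec h)) else (p, q)

section NextStep

variable {x y : ℕ → Bool} {n : ℕ} {u : ℤ} {p q s t : ℕ}

theorem stepProp_nextStep (h : StepProp x y n u p q s t) :
    StepProp x y n u p q (nextStep x y n u p q).1 (nextStep x y n u p q).2 := by
  have hex : ∃ s t, StepProp x y n u p q s t := ⟨s, t, h⟩
  simpa only [nextStep, dif_pos hex] using Nat.find_spec (Nat.find_spec hex)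

theorem nextStep_lexMin (h : StepProp x y n u p q s t) :
    (nextStep x y n u p q).1 < s ∨
      (nextStep x y n u p q).1 = s ∧ (nextStep x y n u p q).2 ≤ t := by
  have hex : ∃ s t, StepProp x y n u p q s t := ⟨s, t, h⟩
  simp only [nextStep, dif_pos hex]
  rcases (Nat.find_min' hex ⟨t, h⟩).lt_or_eq with hlt | heq
  · exact Or.inl hlt
  · exact Or.inr ⟨heq, Nat.find_min' _ (heq ▸ h)⟩

/-- If the second coordinate of the lexicographically smallest step `(s₀, t₀)` exceeded `t`,
comparing zero counts would make `(s₀, t)` a step as well. -/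
theorem nextStep_le (h : StepProp x y n u p q s t) :
    (nextStep x y n u p q).1 ≤ s ∧ (nextStep x y n u p q).2 ≤ t := by
  have hlex := nextStep_lexMin h
  have hmin (t' : ℕ) (h' : StepProp x y n u p q (nextStep x y n u p q).1 t') :=
    nextStep_lexMin h'
  have h₀ := stepProp_nextStep h
  generalize nextStep x y n u p q = st at hlex hmin h₀ ⊢
  obtain ⟨s₀, t₀⟩ := st
  dsimp only at hlex hmin h₀ ⊢
  have hs : s₀ ≤ s := by rcases hlex with h | h <;> omega
  refine ⟨hs, not_lt.mp fun ht => ?_⟩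
  have hx := zeroCount_mono x (a := p + 1) hs
  have hy := zeroCount_mono y (a := q + 1) ht.le
  obtain ⟨-, hqt, -, htn, -, hyt, hu⟩ := h
  obtain ⟨hps₀, -, hs₀n, -, hxs₀, -, hu₀⟩ := h₀
  have := hmin t ⟨hps₀, hqt, hs₀n, htn, hxs₀, hyt, by omega⟩
  omega

end NextStep

def greedySeq (x y : ℕ → Bool) (n : ℕ) (v : List ℤ) : ℕ → ℕ × ℕ
  | 0 => (0, 0)
  | i + 1 => nextStep x y n (v.getD i 0) (greedySeq x y n v i).1 (greedySeq x y n v i).2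

namespace IsStepChain

variable {x y : ℕ → Bool} {n : ℕ} {v : List ℤ} {piF nuF : ℕ → ℕ}

theorem greedySeq_le (h : IsStepChain x y n v piF nuF) (h0 : piF 0 = 0) (h0' : nuF 0 = 0) :
    ∀ i ≤ v.length, (greedySeq x y n v i).1 ≤ piF i ∧ (greedySeq x y n v i).2 ≤ nuF i ∧
      zeroDiff x y (greedySeq x y n v i).1 (greedySeq x y n v i).2 =
        zeroDiff x y (piF i) (nuF i) := by
  intro i
  induction i with
  | zero => simp [greedySeq, h0, h0']
  | succ i ih =>
    intro hi
    obtain ⟨hp, hq, hD⟩ := ih (Nat.le_of_succ_le hi)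
    have hst := (h i hi).of_le_of_zeroDiff_eq hp hq hD
    obtain ⟨hs, ht⟩ := nextStep_le hst
    refine ⟨hs, ht, ?_⟩
    rw [greedySeq, (stepProp_nextStep hst).zeroDiff_eq, hst.zeroDiff_eq, hD]

theorem isAlignment_greedySeq (h : IsStepChain x y n v piF nuF) (h0 : piF 0 = 0)
    (h0' : nuF 0 = 0) :
    IsAlignment x y n v (fun i => (greedySeq x y n v i).1) (fun i => (greedySeq x y n v i).2) := by
  refine ⟨rfl, rfl, fun i hi => ?_⟩
  obtain ⟨hp, hq, hD⟩ := h.greedySeq_le h0 h0' i hi.le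
  have hst := (h i hi).of_le_of_zeroDiff_eq hp hq hD
  have hget : v.getD i 0 = v.get ⟨i, hi⟩ := List.getD_eq_get v 0 ⟨i, hi⟩
  rw [← hget]
  exact ⟨stepProp_nextStep hst, fun s t hst' => nextStep_lexMin hst'⟩

/-- Each cell contributes `min a b = a - max (a - b) 0` with `a - b = vᵢ`, and the `a`'s
telescope: the score is determined by `v` and the final zero difference. -/
theorem score_eq (h : IsStepChain x y n v piF nuF) (h0 : piF 0 = 0) (h0' : nuF 0 = 0) :
    (score x y n v piF nuF : ℤ) = v.length - ∑ i ∈ Finset.range v.length, max (v.getD i 0) 0 +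
      min (zeroCount x 1 n : ℤ) (zeroCount y 1 n + zeroDiff x y (piF v.length) (nuF v.length)) := by
  have hcells : ∀ k ≤ v.length, (∑ i ∈ Finset.range k,
      (min (zeroCount x (piF i + 1) (piF (i + 1))) (zeroCount y (nuF i + 1) (nuF (i + 1))) : ℤ)) =
      zeroCount x 1 (piF k) - ∑ i ∈ Finset.range k, max (v.getD i 0) 0 := by
    intro k
    induction k with
    | zero => simp [h0, zeroCount]
    | succ k ih =>
      intro hk
      obtain ⟨hps, hqt, -, -, -, -, hu⟩ := h k hk
      have := zeroCount_one_add x hps.le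
      rw [Finset.sum_range_succ, Finset.sum_range_succ, ih (Nat.le_of_succ_le hk)]
      omega
  obtain ⟨hpn, hqn⟩ := h.apply_le h0 h0' le_rfl
  have := zeroCount_one_add x hpn
  have := zeroCount_one_add y hqn
  have := hcells v.length le_rfl
  push_cast [score] at this ⊢
  simp only [zeroDiff]
  omega

theorem exists_isAlignment (h : IsStepChain x y n v piF nuF) (h0 : piF 0 = 0) (h0' : nuF 0 = 0) :
    ∃ piF' nuF', IsAlignment x y n v piF' nuF' ∧
      score x y n v piF' nuF' = score x y n v piF nuF := by
  have hal := h.isAlignment_greedySeq h0 h0'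
  refine ⟨_, _, hal, ?_⟩
  have hsc := hal.isStepChain.score_eq hal.1 hal.2.1
  rw [(h.greedySeq_le h0 h0' v.length le_rfl).2.2, ← h.score_eq h0 h0'] at hsc
  exact_mod_cast hsc

end IsStepChain

/-- Proposition 4.1: the LCS length of X and Y is the maximum, over admissible vectors v,
of the score of the alignment associated with v. -/
theorem stmt7 (n : ℕ) (x y : ℕ → Bool) :
    IsGreatest
      {m : ℕ | ∃ (v : List ℤ) (piF nuF : ℕ → ℕ),
        IsAlignment x y n v piF nuF ∧ m = score x y n v piF nuF}
      (lcsN x y n) := by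
  refine ⟨?_, ?_⟩
  · obtain ⟨z, hz, hzx, hzy⟩ := exists_sublist_length_eq_lcsLen (subword x 0 n) (subword y 0 n)
    obtain ⟨v, piF, nuF, h0, h0', h, hle⟩ :=
      exists_isStepChain_of_sublist x y n z 0 0 0 (by simpa using hzx) (by simpa using hzy)
    obtain ⟨piF', nuF', hal, hsc⟩ := h.exists_isAlignment h0 h0'
    refine ⟨v, piF', nuF', hal, le_antisymm ?_ (hal.isStepChain.score_le_lcsN hal.1 hal.2.1)⟩
    rw [lcsN_eq_lcsLen_subword, ← hz, hsc]
    simpa using hle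
  · rintro m ⟨v, piF, nuF, hal, rfl⟩
    exact hal.isStepChain.score_le_lcsN hal.1 hal.2.1
end
end

section
/- For every k ≥ 1 divisible by 100, the number of vectors v = (v_1,…,v_k) ∈ ℤ^k with |v_1| + ⋯ + |v_k| ≤ 2k and with at most 0.01·k nonzero coordinates is at most exp(0.1262·k). -/
/-!
A vector with at most `m` nonzero coordinates is supported on one of the `C(k, m)` sets of size
`m`. On a fixed support of size `m`, a vector of `ℓ¹`-norm at most `N` is determined by its signs
and its vector of absolute values, and stars and bars counts the latter by `C(N + m, m)`.
For `k = 100 m` and `N = 2k` this gives at most `C(100m, m) · 2^m · C(201m, m)`, and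
`C(cm, m) ≤ (cm)^m / m! ≤ (c e)^m` bounds it by `(40200 e²)^m ≤ e^(12.62 m)`.
-/

open scoped BigOperators
open Classical

open Finset

section Counting

variable (ι : Type*) [Fintype ι] (N : ℕ)

/-- Record the slack `N - ∑ f` in the extra coordinate `none`. -/
def sumLeEquivSumEq : {f : ι → ℕ // ∑ i, f i ≤ N} ≃ {P : Option ι → ℕ // ∑ o, P o = N} where
  toFun f := ⟨fun o => o.elim (N - ∑ i, f.1 i) f.1, by
    have := f.2
    simp only [Fintype.sum_option, Option.elim]
    omega⟩
  invFun P := ⟨fun i => P.1 (some i), by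
    have := P.2
    rw [Fintype.sum_option] at this
    change ∑ i, P.1 (some i) ≤ N
    omega⟩
  left_inv _ := rfl
  right_inv P := by
    have := P.2
    rw [Fintype.sum_option] at this
    ext (_ | i)
    · simp only [Option.elim]
      omega
    · rfl

instance : Finite {f : ι → ℕ // ∑ i, f i ≤ N} :=
  .of_equiv _ ((sumLeEquivSumEq ι N).trans (Sym.equivNatSumOfFintype _ N).symm).symm

theorem natCard_sum_le_eq_choose :
    Nat.card {f : ι → ℕ // ∑ i, f i ≤ N} = (N + Fintype.card ι).choose (Fintype.card ι) := by
  rw [Nat.card_congr ((sumLeEquivSumEq ι N).trans (Sym.equivNatSumOfFintype _ N).symm),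
    Nat.card_eq_fintype_card, Sym.card_sym_eq_choose, Fintype.card_option,
    Nat.add_right_comm, Nat.add_sub_cancel, add_comm N, Nat.choose_symm_add]

def signNatAbs (g : {g : ι → ℤ // ∑ i, (g i).natAbs ≤ N}) :
    (ι → Bool) × {f : ι → ℕ // ∑ i, f i ≤ N} :=
  (fun i => decide (g.1 i < 0), ⟨fun i => (g.1 i).natAbs, g.2⟩)

theorem signNatAbs_injective : Function.Injective (signNatAbs ι N) := by
  intro g h hgh
  simp only [signNatAbs, Prod.mk.injEq, funext_iff, Subtype.mk.injEq, decide_eq_decide] at hgh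
  ext i
  have := hgh.1 i
  have := hgh.2 i
  omega

instance : Finite {g : ι → ℤ // ∑ i, (g i).natAbs ≤ N} :=
  .of_injective _ (signNatAbs_injective ι N)

theorem natCard_sum_natAbs_le :
    Nat.card {g : ι → ℤ // ∑ i, (g i).natAbs ≤ N} ≤
      2 ^ Fintype.card ι * (N + Fintype.card ι).choose (Fintype.card ι) := by
  calc _ ≤ Nat.card ((ι → Bool) × {f : ι → ℕ // ∑ i, f i ≤ N}) :=
        Nat.card_le_card_of_injective _ (signNatAbs_injective ι N)
    _ = _ := by
      rw [Nat.card_prod, natCard_sum_le_eq_choose, Nat.card_fun]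
      simp

end Counting

theorem ncard_sum_natAbs_le_of_support_subset {ι : Type*} [Fintype ι] (N : ℕ) (A : Finset ι) :
    {v : ι → ℤ | ∑ i, (v i).natAbs ≤ N ∧ ∀ i ∉ A, v i = 0}.ncard ≤
      2 ^ #A * (N + #A).choose #A := by
  let restrict (v : {v : ι → ℤ | ∑ i, (v i).natAbs ≤ N ∧ ∀ i ∉ A, v i = 0}) :
      {g : A → ℤ // ∑ i, (g i).natAbs ≤ N} :=
    ⟨fun i => v.1 i, by
      rw [Finset.sum_coe_sort A fun i => (v.1 i).natAbs]
      exact (Finset.sum_le_sum_of_subset A.subset_univ).trans v.2.1⟩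
  have restrict_injective : Function.Injective restrict := by
    intro v w hvw
    ext i
    by_cases hi : i ∈ A
    · exact congrFun (congrArg Subtype.val hvw) ⟨i, hi⟩
    · rw [v.2.2 i hi, w.2.2 i hi]
  rw [← Nat.card_coe_set_eq, ← Fintype.card_coe A]
  exact (Nat.card_le_card_of_injective _ restrict_injective).trans (natCard_sum_natAbs_le A N)

theorem ncard_sum_natAbs_le_of_card_support_le {ι : Type*} [Fintype ι] (N : ℕ) {m : ℕ}
    (hm : m ≤ Fintype.card ι) :
    {v : ι → ℤ | ∑ i, (v i).natAbs ≤ N ∧ #{i | v i ≠ 0} ≤ m}.ncard ≤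
      (Fintype.card ι).choose m * (2 ^ m * (N + m).choose m) := by
  set T : Finset ι → Set (ι → ℤ) := fun A => {v | ∑ i, (v i).natAbs ≤ N ∧ ∀ i ∉ A, v i = 0}
  have cover : {v : ι → ℤ | ∑ i, (v i).natAbs ≤ N ∧ #{i | v i ≠ 0} ≤ m} ⊆
      ⋃ A ∈ powersetCard m univ, T A := by
    rintro v ⟨hv, hsupp⟩
    obtain ⟨A, hsuppA, hA⟩ := exists_superset_card_eq hsupp (by simpa using hm)
    refine Set.mem_biUnion (mem_powersetCard.2 ⟨subset_univ A, hA⟩) ⟨hv, fun i hi => ?_⟩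
    by_contra hvi
    exact hi (hsuppA (by simpa using hvi))
  have union_finite : (⋃ A ∈ powersetCard m univ, T A).Finite :=
    (Set.finite_coe_iff.mp (inferInstanceAs (Finite {g : ι → ℤ // ∑ i, (g i).natAbs ≤ N}))).subset
      (Set.iUnion₂_subset fun A _ v hv => hv.1)
  calc _ ≤ (⋃ A ∈ powersetCard m univ, T A).ncard := Set.ncard_le_ncard cover union_finite
    _ ≤ ∑ A ∈ powersetCard m univ, (T A).ncard := set_ncard_biUnion_le _ _
    _ ≤ ∑ A ∈ powersetCard m univ, 2 ^ m * (N + m).choose m := by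
      refine sum_le_sum fun A hA => ?_
      rw [← (mem_powersetCard.1 hA).2]
      exact ncard_sum_natAbs_le_of_support_subset N A
    _ = _ := by rw [sum_const, card_powersetCard, card_univ, smul_eq_mul]

theorem choose_mul_le_pow_exp (c m : ℕ) : ((c * m).choose m : ℝ) ≤ (c * Real.exp 1) ^ m := by
  calc ((c * m).choose m : ℝ) ≤ ((c * m : ℕ) : ℝ) ^ m / m.factorial := Nat.choose_le_pow_div m _
    _ = c ^ m * ((m : ℝ) ^ m / m.factorial) := by push_cast; ring
    _ ≤ c ^ m * Real.exp m := by gcongr; exact Real.pow_div_factorial_le_exp _ m.cast_nonneg m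
    _ = (c * Real.exp 1) ^ m := by rw [mul_pow, Real.exp_one_pow]

theorem le_exp_10_62 : (40200 : ℝ) ≤ Real.exp 10.62 := by
  have exp_ten : (2.7182818283 : ℝ) ^ 10 ≤ Real.exp 10 := by
    rw [show (10 : ℝ) = (10 : ℕ) by norm_num, ← Real.exp_one_pow]
    exact pow_le_pow_left₀ (by norm_num) Real.exp_one_gt_d9.le 10
  have exp_point_six_two : (1.8519 : ℝ) ≤ Real.exp 0.62 := by
    have := Real.sum_le_exp_of_nonneg (by norm_num : (0 : ℝ) ≤ 0.62) 4
    norm_num [sum_range_succ, Nat.factorial] at this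
    linarith
  calc (40200 : ℝ) ≤ 2.7182818283 ^ 10 * 1.8519 := by norm_num
    _ ≤ Real.exp 10 * Real.exp 0.62 := by gcongr
    _ = Real.exp 10.62 := by rw [← Real.exp_add]; norm_num

theorem choose_mul_two_pow_choose_le_exp (m : ℕ) :
    ((100 * m).choose m * (2 ^ m * (201 * m).choose m) : ℝ) ≤ Real.exp (12.62 * m) := by
  calc ((100 * m).choose m * (2 ^ m * (201 * m).choose m) : ℝ)
      ≤ (100 * Real.exp 1) ^ m * (2 ^ m * (201 * Real.exp 1) ^ m) := by
        gcongr <;> exact_mod_cast choose_mul_le_pow_exp _ m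
    _ = (40200 * Real.exp 1 ^ 2) ^ m := by rw [← mul_pow, ← mul_pow]; ring
    _ ≤ (Real.exp 10.62 * Real.exp 1 ^ 2) ^ m := by gcongr; exact le_exp_10_62
    _ = Real.exp (12.62 * m) := by
      rw [Real.exp_one_pow, ← Real.exp_add, ← Real.exp_nat_mul]
      norm_num [mul_comm]

theorem stmt11_general (k : ℕ) (hdiv : 100 ∣ k) :
    ({v : Fin k → ℤ | (∑ i, (v i).natAbs) ≤ 2 * k ∧
        (Finset.univ.filter fun i => v i ≠ 0).card ≤ k / 100}.ncard : ℝ) ≤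
      Real.exp (0.1262 * k) := by
  obtain ⟨m, rfl⟩ := hdiv
  rw [Nat.mul_div_cancel_left m (by norm_num)]
  have count := ncard_sum_natAbs_le_of_card_support_le (ι := Fin (100 * m)) (2 * (100 * m))
    (m := m) (by rw [Fintype.card_fin]; omega)
  rw [Fintype.card_fin, show 2 * (100 * m) + m = 201 * m by ring] at count
  calc _ ≤ ((100 * m).choose m * (2 ^ m * (201 * m).choose m) : ℝ) := by exact_mod_cast count
    _ ≤ Real.exp (12.62 * m) := choose_mul_two_pow_choose_le_exp m
    _ = Real.exp (0.1262 * ↑(100 * m)) := by push_cast; ring_nf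

/-- For every k ≥ 1 divisible by 100, the number of vectors v ∈ ℤ^k with
|v₁| + ⋯ + |v_k| ≤ 2k and at most 0.01·k nonzero coordinates is at most exp(0.1262·k). -/
theorem stmt11 (k : ℕ) (hk : 1 ≤ k) (hdiv : 100 ∣ k) :
    ({v : Fin k → ℤ | (∑ i, (v i).natAbs) ≤ 2 * k ∧
        (Finset.univ.filter fun i => v i ≠ 0).card ≤ k / 100}.ncard : ℝ) ≤
      Real.exp (0.1262 * k) :=
  stmt11_general k hdiv
end

section
/- Let ε ∈ (0, 1/2] and let (ξ_i)_{i≥1} and (η_i)_{i≥1} be two independent sequences of i.i.d. random variables with P(ξ_1 = j) = P(η_1 = j) = ε^j·(1−ε) for j = 0, 1, 2, …. Define the stopping times T = min{ i ≥ 1 : ξ_i ≥ 1 and η_i ≥ 1 } and U = min{ i ≥ 2 : (ξ_{i−1} ≥ 1, η_{i−1} = 0, ξ_i = 0, η_i ≥ 1) or (ξ_{i−1} = 0, η_{i−1} ≥ 1, ξ_i ≥ 1, η_i = 0) }. Then P(U < T) ≥ 2/9. -/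
/-!
Record at each time `i ≥ 1` the letter `(ξ_i ≥ 1, η_i ≥ 1)`. Write `0` (`blank`) for the
letter `(false, false)` and `a_c` (`lone c`) for the letter with a one in exactly one of the
two sequences (`a_true`: only in `ξ`). The event `U < T` contains the cylinder of every word
avoiding the letter `(true, true)` whose only realignable pair `a_c a_¬c` is its last two
letters. These words are `0^x (a_c^(m+1) 0^(g+1))* a_c^(j+1) a_¬c`; none is a proper prefix of
another, so their cylinders are disjoint. By independence a cylinder has probability the
product of the letter weights (`(1-ε)²` for `0`, `ε(1-ε)` for `a_c`), and summing the
resulting geometric series gives `P(U < T) ≥ 2(1-ε)²/(3-3ε+ε²)`, which is at least `2/9`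
for `ε ≤ 1/2`.
-/

open MeasureTheory ProbabilityTheory
open scoped ENNReal

noncomputable section

/-- T = min{ i ≥ 1 : ξ_i ≥ 1 and η_i ≥ 1 } (as an element of ℕ∞, with value ⊤ if no such i). -/
def hitT {Ω : Type*} (ξ η : ℕ → Ω → ℕ) (ω : Ω) : ℕ∞ :=
  sInf {c : ℕ∞ | ∃ i : ℕ, c = (i : ℕ∞) ∧ 1 ≤ i ∧ 1 ≤ ξ i ω ∧ 1 ≤ η i ω}

/-- U = min{ i ≥ 2 : (ξ_{i−1} ≥ 1, η_{i−1} = 0, ξ_i = 0, η_i ≥ 1) or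
(ξ_{i−1} = 0, η_{i−1} ≥ 1, ξ_i ≥ 1, η_i = 0) }. -/
def hitU {Ω : Type*} (ξ η : ℕ → Ω → ℕ) (ω : Ω) : ℕ∞ :=
  sInf {c : ℕ∞ | ∃ i : ℕ, c = (i : ℕ∞) ∧ 2 ≤ i ∧
    ((1 ≤ ξ (i - 1) ω ∧ η (i - 1) ω = 0 ∧ ξ i ω = 0 ∧ 1 ≤ η i ω) ∨
      (ξ (i - 1) ω = 0 ∧ 1 ≤ η (i - 1) ω ∧ 1 ≤ ξ i ω ∧ η i ω = 0))}

lemma ENNReal.tsum_pi_prod {β : Type*} (f : β → ℝ≥0∞) (n : ℕ) :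
    ∑' t : Fin n → β, ∏ i, f (t i) = (∑' b, f b) ^ n := by
  induction n with
  | zero => simp
  | succ n ih =>
    rw [← (Fin.consEquiv fun _ => β).tsum_eq, ENNReal.tsum_prod']
    simp [Fin.consEquiv, Fin.prod_univ_succ, ENNReal.tsum_mul_left, ENNReal.tsum_mul_right, ih,
      pow_succ']

lemma ENNReal.tsum_list_prod_map {β : Type*} (f : β → ℝ≥0∞) :
    ∑' l : List β, (l.map f).prod = (1 - ∑' b, f b)⁻¹ := by
  rw [← List.equivSigmaTuple.symm.tsum_eq, ENNReal.tsum_sigma']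
  simp [List.equivSigmaTuple, List.map_ofFn, List.prod_ofFn, ENNReal.tsum_pi_prod]

lemma ENNReal.inv_one_sub_ofReal {x : ℝ} (h0 : 0 ≤ x) (h1 : x < 1) :
    (1 - ENNReal.ofReal x)⁻¹ = ENNReal.ofReal (1 - x)⁻¹ := by
  rw [← ENNReal.ofReal_one, ← ENNReal.ofReal_sub _ h0, ENNReal.ofReal_inv_of_pos (by linarith)]

lemma ENNReal.ofReal_mul_inv_one_sub {x : ℝ} (h0 : 0 ≤ x) (h1 : x < 1) :
    ENNReal.ofReal x * (1 - ENNReal.ofReal x)⁻¹ = ENNReal.ofReal (x / (1 - x)) := by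
  rw [ENNReal.inv_one_sub_ofReal h0 h1, ← ENNReal.ofReal_mul h0, div_eq_mul_inv]

lemma List.replicate_append_inj {α : Type*} {a : α} {m n : ℕ} {l l' : List α}
    (hl : l.head? ≠ some a) (hl' : l'.head? ≠ some a)
    (h : replicate m a ++ l = replicate n a ++ l') : m = n ∧ l = l' := by
  induction m generalizing n with
  | zero => cases n <;> simp_all [replicate_succ]
  | succ m ih =>
    cases n with
    | zero => simp [← show replicate (m + 1) a ++ l = l' by simpa using h, replicate_succ] at hl'
    | succ n => simpa using ih (by simpa [replicate_succ] using h)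

namespace ZeroCell

open List

abbrev Letter := Bool × Bool

def blank : Letter := (false, false)

def lone (c : Bool) : Letter := (c, !c)

lemma lone_injective : Function.Injective lone := by
  intro b c h
  simpa [lone] using congrArg Prod.fst h

lemma lone_ne_blank (c : Bool) : lone c ≠ blank := by
  cases c <;> simp [lone, blank]

lemma lone_not_ne (c : Bool) : lone (!c) ≠ lone c := by
  cases c <;> simp [lone]

def Realigns (a b : Letter) : Prop := ∃ c, a = lone c ∧ b = lone !c

lemma realigns_lone (c : Bool) : Realigns (lone c) (lone !c) := ⟨c, rfl, rfl⟩

lemma not_realigns_blank_left (a : Letter) : ¬Realigns blank a := by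
  rintro ⟨c, h, -⟩
  exact lone_ne_blank c h.symm

lemma not_realigns_blank_right (a : Letter) : ¬Realigns a blank := by
  rintro ⟨c, -, h⟩
  exact lone_ne_blank _ h.symm

lemma not_realigns_self (a : Letter) : ¬Realigns a a := by
  rintro ⟨c, rfl, h⟩
  exact lone_not_ne c h.symm

def IsFirstRealign (w : List Letter) : Prop :=
  ∃ v c, w = v ++ [lone c, lone !c] ∧ (v ++ [lone c]).IsChain (¬Realigns · ·)

lemma IsFirstRealign.eq_of_prefix {w w' : List Letter} (hw : IsFirstRealign w)
    (hw' : IsFirstRealign w') (h : w <+: w') : w = w' := by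
  obtain ⟨v, c, rfl, -⟩ := hw
  obtain ⟨v', c', rfl, hchain⟩ := hw'
  rw [show v' ++ [lone c', lone !c'] = v' ++ [lone c'] ++ [lone !c'] by simp,
    prefix_concat_iff] at h
  refine (h.resolve_right fun hpre => ?_).trans (by simp)
  have := hchain.prefix hpre
  simp only [isChain_append_cons_cons] at this
  exact this.2.1 (realigns_lone c)

abbrev Block := Bool × ℕ × ℕ

def block (b : Block) : List Letter :=
  replicate (b.2.1 + 1) (lone b.1) ++ replicate (b.2.2 + 1) blank

def tailWord (bs : List Block) (c : Bool) (j : ℕ) : List Letter :=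
  bs.flatMap block ++ (replicate (j + 1) (lone c) ++ [lone !c])

abbrev WinIndex := ℕ × List Block × Bool × ℕ

def winWord (i : WinIndex) : List Letter :=
  replicate i.1 blank ++ tailWord i.2.1 i.2.2.1 i.2.2.2

lemma isChain_replicate_blank_append {l : List Letter} (n : ℕ) (h : l.IsChain (¬Realigns · ·)) :
    (replicate n blank ++ l).IsChain (¬Realigns · ·) :=
  (isChain_replicate_of_rel n (not_realigns_self blank)).append h fun a ha b _ => by
    obtain ⟨-, rfl⟩ : n ≠ 0 ∧ blank = a := by simpa [getLast?_replicate] using ha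
    exact not_realigns_blank_left b

lemma isChain_block_append {l : List Letter} (b : Block) (h : l.IsChain (¬Realigns · ·)) :
    (block b ++ l).IsChain (¬Realigns · ·) := by
  rw [block, append_assoc]
  refine (isChain_replicate_of_rel _ (not_realigns_self _)).append
    (isChain_replicate_blank_append _ h) fun a _ b hb => ?_
  obtain rfl : blank = b := by simpa [head?_append, head?_replicate] using hb
  exact not_realigns_blank_right a

lemma isFirstRealign_winWord (i : WinIndex) : IsFirstRealign (winWord i) := by
  obtain ⟨x, bs, c, j⟩ := i
  refine ⟨replicate x blank ++ (bs.flatMap block ++ replicate j (lone c)), c, ?_, ?_⟩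
  · simp [winWord, tailWord, replicate_succ']
  · rw [append_assoc, append_assoc, ← replicate_succ']
    refine isChain_replicate_blank_append _ ?_
    induction bs with
    | nil => exact isChain_replicate_of_rel _ (not_realigns_self _)
    | cons b bs ih => simpa [append_assoc] using isChain_block_append b ih

lemma true_true_notMem_winWord (i : WinIndex) : (true, true) ∉ winWord i := by
  simp [winWord, tailWord, block, blank, lone, mem_replicate]

lemma tailWord_nil (c : Bool) (j : ℕ) :
    tailWord [] c j = replicate (j + 1) (lone c) ++ [lone !c] := rfl

lemma tailWord_cons (b : Block) (bs : List Block) (c : Bool) (j : ℕ) :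
    tailWord (b :: bs) c j =
      replicate (b.2.1 + 1) (lone b.1) ++ (replicate (b.2.2 + 1) blank ++ tailWord bs c j) := by
  simp [tailWord, block]

lemma head?_tailWord_ne_blank (bs : List Block) (c : Bool) (j : ℕ) :
    (tailWord bs c j).head? ≠ some blank := by
  cases bs with
  | nil => simpa [tailWord_nil, replicate_succ] using lone_ne_blank c
  | cons b bs => simpa [tailWord_cons, replicate_succ] using lone_ne_blank b.1

lemma lone_run_append_inj {c d : Bool} {m n : ℕ} {l l' : List Letter}
    (hl : l.head? ≠ some (lone c)) (hl' : l'.head? ≠ some (lone d))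
    (h : replicate (m + 1) (lone c) ++ l = replicate (n + 1) (lone d) ++ l') :
    c = d ∧ m = n ∧ l = l' := by
  obtain rfl : c = d := lone_injective (by simpa [replicate_succ] using congrArg head? h)
  simpa using replicate_append_inj hl hl' h

lemma tailWord_inj {bs bs' : List Block} {c c' : Bool} {j j' : ℕ}
    (h : tailWord bs c j = tailWord bs' c' j') : bs = bs' ∧ c = c' ∧ j = j' := by
  have head_blanks (bs : List Block) (c : Bool) (j : ℕ) (d : Bool) (g : ℕ) :
      (replicate (g + 1) blank ++ tailWord bs c j).head? ≠ some (lone d) := by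
    simpa [replicate_succ] using (lone_ne_blank d).symm
  have head_last (c : Bool) : [lone !c].head? ≠ some (lone c) := by
    simpa using lone_not_ne c
  have last_ne_blanks (c d : Bool) (bs : List Block) (j g : ℕ) :
      [lone !c] ≠ replicate (g + 1) blank ++ tailWord bs d j := by
    simpa [replicate_succ] using fun h => absurd h (lone_ne_blank _)
  induction bs generalizing bs' with
  | nil =>
    cases bs' with
    | nil =>
      obtain ⟨rfl, rfl, -⟩ :=
        lone_run_append_inj (head_last c) (head_last c') (by simpa only [tailWord_nil] using h)
      simp
    | cons b' bs' =>
      rw [tailWord_nil, tailWord_cons] at h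
      exact absurd (lone_run_append_inj (head_last c) (head_blanks _ _ _ _ _) h).2.2
        (last_ne_blanks _ _ _ _ _)
  | cons b bs ih =>
    cases bs' with
    | nil =>
      rw [tailWord_nil, tailWord_cons] at h
      exact absurd (lone_run_append_inj (head_blanks _ _ _ _ _) (head_last c') h).2.2.symm
        (last_ne_blanks _ _ _ _ _)
    | cons b' bs' =>
      rw [tailWord_cons, tailWord_cons] at h
      obtain ⟨hc, hm, h⟩ := lone_run_append_inj (head_blanks _ _ _ _ _) (head_blanks _ _ _ _ _) h
      obtain ⟨hg, h⟩ := replicate_append_inj (head?_tailWord_ne_blank _ _ _)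
        (head?_tailWord_ne_blank _ _ _) h
      obtain ⟨rfl, rfl, rfl⟩ := ih h
      exact ⟨by rw [Prod.ext hc (Prod.ext hm (by omega))], rfl, rfl⟩

lemma winWord_injective : Function.Injective winWord := by
  rintro ⟨x, bs, c, j⟩ ⟨x', bs', c', j'⟩ h
  obtain ⟨rfl, h⟩ := replicate_append_inj (head?_tailWord_ne_blank _ _ _)
    (head?_tailWord_ne_blank _ _ _) h
  obtain ⟨rfl, rfl, rfl⟩ := tailWord_inj h
  rfl

section Cylinders

variable {Ω : Type*} (ξ η : ℕ → Ω → ℕ)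

def letter (i : ℕ) (ω : Ω) : Letter := (decide (1 ≤ ξ i ω), decide (1 ≤ η i ω))

/-- The letters at times `1, …, n`; time `0` plays no role in `hitT` and `hitU`. -/
def letters (n : ℕ) (ω : Ω) : List Letter := (range n).map fun p => letter ξ η (p + 1) ω

def cylinder (w : List Letter) : Set Ω := {ω | letters ξ η w.length ω = w}

variable {ξ η}

lemma hitU_le {i : ℕ} {ω : Ω} (hi : 2 ≤ i)
    (h : Realigns (letter ξ η (i - 1) ω) (letter ξ η i ω)) : hitU ξ η ω ≤ i := by
  obtain ⟨c, h₁, h₂⟩ := h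
  refine sInf_le ⟨i, rfl, hi, ?_⟩
  cases c <;> simp [letter, lone, Prod.ext_iff] at h₁ h₂ <;> omega

lemma le_hitT {n : ℕ} {ω : Ω} (h : ∀ i, 1 ≤ i → i < n → letter ξ η i ω ≠ (true, true)) :
    (n : ℕ∞) ≤ hitT ξ η ω := by
  refine le_sInf ?_
  rintro _ ⟨i, rfl, hi, hξ, hη⟩
  by_contra! hin
  exact h i hi (by exact_mod_cast hin) (by simp [letter, hξ, hη])

lemma letter_eq_of_mem_cylinder {w : List Letter} {ω : Ω} (hω : ω ∈ cylinder ξ η w) {p : ℕ}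
    (hp : p < w.length) : letter ξ η (p + 1) ω = w[p] := by
  have hlen : p < (letters ξ η w.length ω).length := by simpa [letters]
  simpa [letters] using getElem_of_eq hω hlen

lemma hitU_lt_hitT_of_mem_cylinder {w : List Letter} (hw : IsFirstRealign w)
    (htt : (true, true) ∉ w) {ω : Ω} (hω : ω ∈ cylinder ξ η w) : hitU ξ η ω < hitT ξ η ω := by
  obtain ⟨v, c, rfl, -⟩ := hw
  have hletter := fun p hp => letter_eq_of_mem_cylinder hω (p := p) hp
  have hU : hitU ξ η ω ≤ (v.length + 2 : ℕ) := hitU_le (by omega) ⟨c,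
    by simpa using hletter v.length (by simp), by simpa using hletter (v.length + 1) (by simp)⟩
  have hT : ((v.length + 3 : ℕ) : ℕ∞) ≤ hitT ξ η ω := le_hitT fun i hi hin h => by
    obtain ⟨p, rfl⟩ : ∃ p, i = p + 1 := ⟨i - 1, by omega⟩
    have hp : p < (v ++ [lone c, lone !c]).length := by simp; omega
    exact htt (h.symm.trans (hletter p hp) ▸ getElem_mem hp)
  exact hU.trans_lt ((Nat.cast_lt.2 (by omega)).trans_le hT)

lemma letters_prefix {m n : ℕ} (h : m ≤ n) (ω : Ω) : letters ξ η m ω <+: letters ξ η n ω := by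
  rw [prefix_iff_eq_take]
  simp [letters, ← map_take, take_range, h]

lemma IsFirstRealign.eq_of_mem_cylinder {w w' : List Letter} (hw : IsFirstRealign w)
    (hw' : IsFirstRealign w') {ω : Ω} (h : ω ∈ cylinder ξ η w) (h' : ω ∈ cylinder ξ η w') :
    w = w' := by
  have of_length_le {w w' : List Letter} (hw : IsFirstRealign w) (hw' : IsFirstRealign w')
      (h : ω ∈ cylinder ξ η w) (h' : ω ∈ cylinder ξ η w') (hlen : w.length ≤ w'.length) :
      w = w' :=
    hw.eq_of_prefix hw' (h ▸ h' ▸ letters_prefix hlen ω)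
  rcases le_total w.length w'.length with hlen | hlen
  · exact of_length_le hw hw' h h' hlen
  · exact (of_length_le hw' hw h' h hlen).symm

lemma pairwise_disjoint_cylinder_winWord :
    Pairwise (Function.onFun _root_.Disjoint fun i => cylinder ξ η (winWord i)) :=
  fun i i' hne => Set.disjoint_left.2 fun _ h h' => hne (winWord_injective
    ((isFirstRealign_winWord i).eq_of_mem_cylinder (isFirstRealign_winWord i') h h'))

def timeIndex (n : ℕ) : Fin n ⊕ Fin n → ℕ ⊕ ℕ :=
  Sum.map (fun p => (p : ℕ) + 1) (fun p => (p : ℕ) + 1)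

lemma timeIndex_injective (n : ℕ) : (timeIndex n).Injective :=
  Sum.map_injective.2 ⟨fun _ _ h => Fin.ext (Nat.succ_injective h),
    fun _ _ h => Fin.ext (Nat.succ_injective h)⟩

lemma cylinder_eq_iInter (w : List Letter) :
    cylinder ξ η w = ⋂ z, Sum.elim ξ η (timeIndex w.length z) ⁻¹'
      Sum.elim (fun p => {k | decide (1 ≤ k) = w[p].1})
        (fun p => {k | decide (1 ≤ k) = w[p].2}) z := by
  ext ω
  simp only [cylinder, Set.mem_ofPred_eq, Set.mem_iInter, Sum.forall, timeIndex, Sum.map_inl,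
    Sum.map_inr, Sum.elim_inl, Sum.elim_inr, Set.mem_preimage]
  rw [List.ext_getElem_iff]
  simp [letters, letter, Prod.ext_iff, forall_and, Fin.forall_iff]

variable (p q : ℝ≥0∞)

def letterWeight (a : Letter) : ℝ≥0∞ := cond a.1 p q * cond a.2 p q

def weight (w : List Letter) : ℝ≥0∞ := (w.map (letterWeight p q)).prod

variable {p q} [MeasurableSpace Ω] {μ : Measure Ω}

lemma measure_cylinder (hindep : iIndepFun (Sum.elim ξ η) μ)
    (hξ : ∀ i b, μ {ω | decide (1 ≤ ξ i ω) = b} = cond b p q)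
    (hη : ∀ i b, μ {ω | decide (1 ≤ η i ω) = b} = cond b p q) (w : List Letter) :
    μ (cylinder ξ η w) = weight p q w := by
  rw [cylinder_eq_iInter, weight, ← ofFn_getElem_eq_map, prod_ofFn,
    (hindep.precomp (timeIndex_injective w.length)).meas_iInter fun z => ⟨_, .of_discrete, rfl⟩,
    Fintype.prod_sum_type, ← Finset.prod_mul_distrib]
  simp [timeIndex, hξ, hη, letterWeight]

lemma measurableSet_cylinder (hξ : ∀ i, Measurable (ξ i)) (hη : ∀ i, Measurable (η i))
    (w : List Letter) : MeasurableSet (cylinder ξ η w) := by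
  rw [cylinder_eq_iInter]
  refine .iInter fun z => ?_
  rcases z with p | p
  · exact hξ _ .of_discrete
  · exact hη _ .of_discrete

end Cylinders

lemma measure_decide_one_le {Ω : Type*} [MeasurableSpace Ω] {μ : Measure Ω}
    [IsProbabilityMeasure μ] {X : Ω → ℕ} (hX : Measurable X) {ε : ℝ} (hε : ε ≤ 1)
    (h0 : μ {ω | X ω = 0} = ENNReal.ofReal (1 - ε)) (b : Bool) :
    μ {ω | decide (1 ≤ X ω) = b} = cond b (ENNReal.ofReal ε) (ENNReal.ofReal (1 - ε)) := by
  have hzero : {ω | decide (1 ≤ X ω) = false} = {ω | X ω = 0} := by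
    ext ω
    simp
  cases b
  · simpa [hzero] using h0
  · have hcompl : {ω | decide (1 ≤ X ω) = true} = {ω | X ω = 0}ᶜ := by
      ext ω
      simp [Nat.one_le_iff_ne_zero]
    have hmeas : MeasurableSet {ω | X ω = 0} := hX (measurableSet_singleton 0)
    rw [hcompl, prob_compl_eq_one_sub hmeas, h0, ← ENNReal.ofReal_one,
      ← ENNReal.ofReal_sub _ (by linarith)]
    simp

section Weights

variable {p q : ℝ≥0∞}

@[simp] lemma letterWeight_blank : letterWeight p q blank = q * q := rfl

@[simp] lemma letterWeight_lone (c : Bool) : letterWeight p q (lone c) = p * q := by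
  cases c <;> simp [letterWeight, lone, mul_comm]

lemma weight_winWord (x : ℕ) (bs : List Block) (c : Bool) (j : ℕ) :
    weight p q (winWord (x, bs, c, j)) = (q * q) ^ x *
      ((bs.map fun b => (p * q) ^ (b.2.1 + 1) * (q * q) ^ (b.2.2 + 1)).prod *
        ((p * q) ^ (j + 1) * (p * q))) := by
  simp [weight, winWord, tailWord, block, flatMap_def, prod_flatten, Function.comp_def]

/-- With `r = p q`, `s = q²`: `(1 - s)⁻¹` sums the leading blanks, `(1 - G)⁻¹` with
`G = 2 r/(1 - r) · s/(1 - s)` sums the blocks, and `2 r/(1 - r) · r` sums the final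
`a_c^(j+1) a_¬c`. -/
def winProb (p q : ℝ≥0∞) : ℝ≥0∞ :=
  (1 - q * q)⁻¹ * ((1 - 2 * (p * q * (1 - p * q)⁻¹ * (q * q * (1 - q * q)⁻¹)))⁻¹ *
    (2 * (p * q * (1 - p * q)⁻¹ * (p * q))))

lemma tsum_weight_winWord : ∑' i, weight p q (winWord i) = winProb p q := by
  have tsum_bool_const (a : ℝ≥0∞) : ∑' _ : Bool, a = 2 * a := by simp [two_mul]
  have hblock : ∑' b : Block, (p * q) ^ (b.2.1 + 1) * (q * q) ^ (b.2.2 + 1) =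
      2 * (p * q * (1 - p * q)⁻¹ * (q * q * (1 - q * q)⁻¹)) := by
    simp only [ENNReal.tsum_prod', ENNReal.tsum_mul_left, ENNReal.tsum_mul_right,
      ENNReal.tsum_geometric_add_one, tsum_bool_const]
  simp only [ENNReal.tsum_prod', weight_winWord, ENNReal.tsum_mul_left, ENNReal.tsum_mul_right,
    ENNReal.tsum_geometric, ENNReal.tsum_list_prod_map, hblock, ENNReal.tsum_geometric_add_one,
    tsum_bool_const, winProb]
  ring

end Weights

lemma winProb_ofReal {r s : ℝ} (hr0 : 0 ≤ r) (hr1 : r < 1) (hs0 : 0 ≤ s) (hs1 : s < 1)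
    (hden : 0 < (1 - r) * (1 - s) - 2 * r * s) {p q : ℝ≥0∞}
    (hpq : p * q = ENNReal.ofReal r) (hqq : q * q = ENNReal.ofReal s) :
    winProb p q = ENNReal.ofReal (2 * r ^ 2 / ((1 - r) * (1 - s) - 2 * r * s)) := by
  have h1 : 0 < 1 - r := sub_pos.2 hr1
  have h2 : 0 < 1 - s := sub_pos.2 hs1
  have hG0 : 0 ≤ 2 * (r / (1 - r) * (s / (1 - s))) := by positivity
  have hG1 : 2 * (r / (1 - r) * (s / (1 - s))) < 1 := by
    rw [← sub_pos, show 1 - 2 * (r / (1 - r) * (s / (1 - s))) =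
      ((1 - r) * (1 - s) - 2 * r * s) / ((1 - r) * (1 - s)) by field_simp]
    positivity
  rw [winProb, hpq, hqq, ENNReal.ofReal_mul_inv_one_sub hr0 hr1,
    ENNReal.ofReal_mul_inv_one_sub hs0 hs1, ENNReal.inv_one_sub_ofReal hs0 hs1,
    ← ENNReal.ofReal_mul (by positivity), ← ENNReal.ofReal_ofNat 2,
    ← ENNReal.ofReal_mul (by norm_num), ENNReal.inv_one_sub_ofReal hG0 hG1,
    ← ENNReal.ofReal_mul (by positivity), ← ENNReal.ofReal_mul (by norm_num),
    ← ENNReal.ofReal_mul (by positivity), ← ENNReal.ofReal_mul (by positivity)]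
  congr 1
  field_simp

lemma two_ninths_le_winProb {ε : ℝ} (hε : 0 < ε) (hε' : ε ≤ 1 / 2) :
    2 / 9 ≤ winProb (ENNReal.ofReal ε) (ENNReal.ofReal (1 - ε)) := by
  have hden : 0 < (1 - ε * (1 - ε)) * (1 - (1 - ε) * (1 - ε)) -
      2 * (ε * (1 - ε)) * ((1 - ε) * (1 - ε)) := by
    have : 0 < 3 - 3 * ε + ε ^ 2 := by nlinarith
    nlinarith [mul_pos (pow_pos hε 2) this]
  rw [winProb_ofReal (by nlinarith) (by nlinarith) (mul_self_nonneg _) (by nlinarith) hden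
    (ENNReal.ofReal_mul hε.le).symm (ENNReal.ofReal_mul (by linarith)).symm,
    ← ENNReal.ofReal_ofNat 2, ← ENNReal.ofReal_ofNat 9, ← ENNReal.ofReal_div_of_pos (by norm_num)]
  refine ENNReal.ofReal_le_ofReal ?_
  rw [div_le_div_iff₀ (by norm_num) hden]
  nlinarith [sq_nonneg ε]

end ZeroCell

open ZeroCell

/-- If (ξ_i) and (η_i) are independent i.i.d. sequences with P(ξ = j) = ε^j (1−ε), then the
probability that a 0-cell can be broken up satisfies P(U < T) ≥ 2/9. -/
theorem stmt12 {Ω : Type*} [MeasurableSpace Ω] (μ : Measure Ω) [IsProbabilityMeasure μ]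
    (ε : ℝ) (hε : 0 < ε) (hε' : ε ≤ 1 / 2)
    (ξ η : ℕ → Ω → ℕ)
    (hmeasξ : ∀ i, Measurable (ξ i)) (hmeasη : ∀ i, Measurable (η i))
    (hindep : iIndepFun (Sum.elim ξ η) μ)
    (hdistξ : ∀ i j, μ {ω | ξ i ω = j} = ENNReal.ofReal (ε ^ j * (1 - ε)))
    (hdistη : ∀ i j, μ {ω | η i ω = j} = ENNReal.ofReal (ε ^ j * (1 - ε))) :
    (2 / 9 : ℝ≥0∞) ≤ μ {ω | hitU ξ η ω < hitT ξ η ω} := by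
  have hε1 : ε ≤ 1 := by linarith
  have hξ i := measure_decide_one_le (hmeasξ i) hε1 (by simpa using hdistξ i 0)
  have hη i := measure_decide_one_le (hmeasη i) hε1 (by simpa using hdistη i 0)
  calc (2 / 9 : ℝ≥0∞)
      ≤ winProb (ENNReal.ofReal ε) (ENNReal.ofReal (1 - ε)) := two_ninths_le_winProb hε hε'
    _ = ∑' i, μ (cylinder ξ η (winWord i)) := by
      simp only [measure_cylinder hindep hξ hη, tsum_weight_winWord]
    _ = μ (⋃ i, cylinder ξ η (winWord i)) :=
      (measure_iUnion pairwise_disjoint_cylinder_winWord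
        fun _ => measurableSet_cylinder hmeasξ hmeasη _).symm
    _ ≤ μ {ω | hitU ξ η ω < hitT ξ η ω} := measure_mono (Set.iUnion_subset fun i _ =>
      hitU_lt_hitT_of_mem_cylinder (isFirstRealign_winWord i) (true_true_notMem_winWord i))
end
end

section
/- There exists a constant B > 1, not depending on ε, such that the following holds for every ε ∈ (0, 1/2] and every k ≥ 1: let v_1, …, v_k be integers with |v_1| + ⋯ + |v_k| ≤ 2k, let G_1, …, G_k be i.i.d. Geometric(ε) random variables, and let ρ_1, …, ρ_k be independent random variables such that G_j ≤ ρ_j ≤ G_j + max(v_j, 0) for each j. Then P( Σ_{j=1}^k ρ_j ≥ (B/ε)·k ) ≤ exp(−(ln 16 + 1)·k). -/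
open MeasureTheory ProbabilityTheory
open scoped ENNReal

/-!
Since `ρ_j ≤ G_j + (v_j)⁺` and `∑ (v_j)⁺ ≤ 2k ≤ k/ε`, the event `∑ ρ_j ≥ 12k/ε` forces
`∑ G_j ≥ 11k/ε`. For `ε ≤ 1/2` a Geometric(ε) variable satisfies `E[exp(εG/2)] ≤ 4`, so the
Chernoff bound at `t = ε/2` bounds the probability by `exp(-11k/2) · 4^k ≤ exp(-(ln 16 + 1)k)`.
-/

namespace Real

lemma mul_exp_le_two_mul_one_sub_exp_neg {x : ℝ} (hx₀ : 0 ≤ x) (hx : x ≤ 1 / 4) :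
    x * exp x ≤ 2 * (1 - exp (-x)) := by
  have hsmall : x * exp (-x) ≤ 1 - exp (-x) := by
    have := mul_le_mul_of_nonneg_right (add_one_le_exp x) (exp_pos (-x)).le
    rw [← exp_add, add_neg_cancel, exp_zero] at this
    linarith
  have hexp_two : exp (2 * x) ≤ 2 := by
    have h : exp (1 / 2 : ℝ) ^ 2 = exp 1 := by rw [← exp_nat_mul]; norm_num
    have := exp_one_lt_d9
    nlinarith [exp_le_exp.2 (show 2 * x ≤ 1 / 2 by linarith), exp_pos (1 / 2 : ℝ)]
  calc x * exp x = x * exp (-x) * exp (2 * x) := by rw [mul_assoc, ← exp_add]; ring_nf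
    _ ≤ x * exp (-x) * 2 := by gcongr
    _ ≤ 2 * (1 - exp (-x)) := by linarith

lemma exp_half_mul_geometric_le {ε : ℝ} (hε₀ : 0 ≤ ε) (hε : ε ≤ 1) (n : ℕ) :
    exp (ε / 2 * (n + 1 : ℕ)) * (ε * (1 - ε) ^ n) ≤ ε * exp (ε / 2) * exp (-(ε / 2)) ^ n := by
  have hbase : exp (ε / 2) * (1 - ε) ≤ exp (-(ε / 2)) :=
    calc exp (ε / 2) * (1 - ε) ≤ exp (ε / 2) * exp (-ε) := by gcongr; exact one_sub_le_exp_neg ε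
      _ = exp (-(ε / 2)) := by rw [← exp_add]; ring_nf
  calc exp (ε / 2 * (n + 1 : ℕ)) * (ε * (1 - ε) ^ n)
      = ε * exp (ε / 2) * (exp (ε / 2) * (1 - ε)) ^ n := by
        rw [mul_pow, ← exp_nat_mul,
          show ε / 2 * (n + 1 : ℕ) = ε / 2 + n * (ε / 2) by push_cast; ring, exp_add]
        ring
    _ ≤ ε * exp (ε / 2) * exp (-(ε / 2)) ^ n := by gcongr

lemma tsum_exp_half_mul_geometric_le_four {ε : ℝ} (hε : 0 < ε) (hε2 : ε ≤ 1 / 2) :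
    ∑' n : ℕ, ε * exp (ε / 2) * exp (-(ε / 2)) ^ n ≤ 4 := by
  have hr : exp (-(ε / 2)) < 1 := exp_lt_one_iff.2 (by linarith)
  rw [tsum_mul_left, tsum_geometric_of_lt_one (exp_nonneg _) hr, ← div_eq_mul_inv,
    div_le_iff₀ (by linarith)]
  linarith [mul_exp_le_two_mul_one_sub_exp_neg (x := ε / 2) (by linarith) (by linarith)]

end Real

lemma MeasureTheory.Measure.singleton_zero_eq_zero_of_tsum_succ (ν : Measure ℕ)
    [IsProbabilityMeasure ν] (h : ∑' n, ν {n + 1} = 1) : ν {0} = 0 := by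
  have htot := lintegral_countable' (μ := ν) fun _ ↦ 1
  rw [lintegral_const, measure_univ, tsum_eq_zero_add' ENNReal.summable] at htot
  simp only [one_mul, h] at htot
  exact (ENNReal.add_left_inj ENNReal.one_ne_top).1 (htot.symm.trans (zero_add 1).symm)

lemma MeasureTheory.lintegral_nat_eq_tsum_succ {ν : Measure ℕ} (h₀ : ν {0} = 0)
    (f : ℕ → ℝ≥0∞) :
    ∫⁻ n, f n ∂ν = ∑' n, f (n + 1) * ν {n + 1} := by
  rw [lintegral_countable', tsum_eq_zero_add' ENNReal.summable, h₀, mul_zero, zero_add]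

lemma lintegral_exp_half_mul_le_four {Ω : Type*} [MeasurableSpace Ω] {μ : Measure Ω}
    [IsProbabilityMeasure μ] {ε : ℝ} (hε : 0 < ε) (hε2 : ε ≤ 1 / 2) {X : Ω → ℕ}
    (hX : Measurable X)
    (hlaw : ∀ n : ℕ, μ {ω | X ω = n + 1} = ENNReal.ofReal (ε * (1 - ε) ^ n)) :
    ∫⁻ ω, ENNReal.ofReal (Real.exp (ε / 2 * X ω)) ∂μ ≤ ENNReal.ofReal 4 := by
  set ν := μ.map X
  have : IsProbabilityMeasure ν := Measure.isProbabilityMeasure_map hX.aemeasurable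
  have hν : ∀ n, ν {n} = μ {ω | X ω = n} :=
    fun n ↦ Measure.map_apply hX (measurableSet_singleton n)
  have hlaw_nonneg : ∀ n : ℕ, 0 ≤ ε * (1 - ε) ^ n :=
    fun n ↦ mul_nonneg hε.le (pow_nonneg (by linarith) n)
  have hsum : ∑' n, ν {n + 1} = 1 := by
    have hr : 1 - ε < 1 := by linarith
    have hgeom : ∑' n : ℕ, ε * (1 - ε) ^ n = 1 := by
      rw [tsum_mul_left, tsum_geometric_of_lt_one (by linarith) hr, sub_sub_cancel,
        mul_inv_cancel₀ hε.ne']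
    simp_rw [hν, hlaw]
    rw [← ENNReal.ofReal_tsum_of_nonneg hlaw_nonneg
      ((summable_geometric_of_lt_one (by linarith) hr).mul_left ε), hgeom, ENNReal.ofReal_one]
  have hr : Real.exp (-(ε / 2)) < 1 := Real.exp_lt_one_iff.2 (by linarith)
  calc ∫⁻ ω, ENNReal.ofReal (Real.exp (ε / 2 * X ω)) ∂μ
      = ∫⁻ n, ENNReal.ofReal (Real.exp (ε / 2 * n)) ∂ν :=
        (lintegral_map (f := fun n : ℕ ↦ ENNReal.ofReal (Real.exp (ε / 2 * n)))
          (measurable_of_countable _) hX).symm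
    _ = ∑' n : ℕ, ENNReal.ofReal (Real.exp (ε / 2 * (n + 1 : ℕ)) * (ε * (1 - ε) ^ n)) := by
      rw [lintegral_nat_eq_tsum_succ (ν.singleton_zero_eq_zero_of_tsum_succ hsum)]
      simp_rw [hν, hlaw, ENNReal.ofReal_mul (Real.exp_nonneg _)]
    _ ≤ ∑' n : ℕ, ENNReal.ofReal (ε * Real.exp (ε / 2) * Real.exp (-(ε / 2)) ^ n) :=
      ENNReal.tsum_le_tsum fun n ↦ ENNReal.ofReal_le_ofReal
        (Real.exp_half_mul_geometric_le hε.le (by linarith) n)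
    _ = ENNReal.ofReal (∑' n : ℕ, ε * Real.exp (ε / 2) * Real.exp (-(ε / 2)) ^ n) :=
      (ENNReal.ofReal_tsum_of_nonneg (fun n ↦ by positivity)
        ((summable_geometric_of_lt_one (Real.exp_nonneg _) hr).mul_left _)).symm
    _ ≤ ENNReal.ofReal 4 :=
      ENNReal.ofReal_le_ofReal (Real.tsum_exp_half_mul_geometric_le_four hε hε2)

lemma ProbabilityTheory.iIndepFun.measureReal_sum_ge_le_of_lintegral_exp_le {Ω ι : Type*}
    [MeasurableSpace Ω] {μ : Measure Ω} [Fintype ι] {X : ι → Ω → ℝ} (hind : iIndepFun X μ)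
    (hX : ∀ i, Measurable (X i)) {t M : ℝ} (ht : 0 ≤ t) (hM : 0 ≤ M)
    (hbound : ∀ i, ∫⁻ ω, ENNReal.ofReal (Real.exp (t * X i ω)) ∂μ ≤ ENNReal.ofReal M) (a : ℝ) :
    μ.real {ω | a ≤ ∑ i, X i ω} ≤ Real.exp (-t * a) * M ^ Fintype.card ι := by
  have := hind.isProbabilityMeasure
  have hmeas : ∀ i, AEStronglyMeasurable (fun ω ↦ Real.exp (t * X i ω)) μ :=
    fun i ↦ ((hX i).const_mul t).exp.aestronglyMeasurable
  have hint : ∀ i, Integrable (fun ω ↦ Real.exp (t * X i ω)) μ := fun i ↦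
    ⟨hmeas i, (hasFiniteIntegral_iff_ofReal (ae_of_all _ fun _ ↦ Real.exp_nonneg _)).2
      ((hbound i).trans_lt ENNReal.ofReal_lt_top)⟩
  have hmgf : ∀ i, mgf (X i) μ t ≤ M := fun i ↦ by
    rw [mgf, integral_eq_lintegral_of_nonneg_ae (ae_of_all _ fun _ ↦ Real.exp_nonneg _) (hmeas i)]
    exact ENNReal.toReal_le_of_le_ofReal hM (hbound i)
  calc μ.real {ω | a ≤ ∑ i, X i ω}
      ≤ Real.exp (-t * a) * mgf (∑ i, X i) μ t := by
        simpa only [Finset.sum_apply] using measure_ge_le_exp_mul_mgf (X := ∑ i, X i) a ht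
          (hind.integrable_exp_mul_sum hX fun i _ ↦ hint i)
    _ = Real.exp (-t * a) * ∏ i, mgf (X i) μ t := by rw [hind.mgf_sum hX]
    _ ≤ Real.exp (-t * a) * M ^ Fintype.card ι := by
        gcongr
        exact (Finset.prod_le_prod (fun i _ ↦ mgf_nonneg) fun i _ ↦ hmgf i).trans_eq
          (Finset.prod_const M)

lemma Real.exp_neg_eleven_div_two_mul_mul_four_pow_le (k : ℕ) :
    Real.exp (-(11 / 2) * k) * 4 ^ k ≤ Real.exp (-(Real.log 16 + 1) * k) := by
  have hlog : Real.log 16 = 2 * Real.log 4 := by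
    rw [show (16 : ℝ) = 4 ^ 2 by norm_num, Real.log_pow]; norm_num
  have hlog4 : Real.log 4 < 3 / 2 := by
    rw [show (4 : ℝ) = 2 ^ 2 by norm_num, Real.log_pow]; push_cast
    linarith [Real.log_two_lt_d9]
  rw [← Real.exp_log (by norm_num : (0 : ℝ) < 4), ← Real.exp_nat_mul, ← Real.exp_add,
    Real.exp_le_exp, hlog]
  nlinarith [(Nat.cast_nonneg k : (0 : ℝ) ≤ k)]

lemma Finset.sum_le_sum_add_sum_natAbs {ι : Type*} (s : Finset ι) {G ρ : ι → ℕ} {v : ι → ℤ}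
    (h : ∀ j, ρ j ≤ G j + (v j).toNat) :
    ∑ j ∈ s, ρ j ≤ ∑ j ∈ s, G j + ∑ j ∈ s, (v j).natAbs := by
  rw [← Finset.sum_add_distrib]
  exact Finset.sum_le_sum fun j _ ↦ (h j).trans (by omega)

/-- Lemma 7.7: there is a constant B > 1, not depending on ε, such that for every ε ∈ (0, 1/2],
k ≥ 1, integers v₁, …, v_k with |v₁| + ⋯ + |v_k| ≤ 2k, i.i.d. Geometric(ε) variables
G₁, …, G_k, and independent variables ρ₁, …, ρ_k with G_j ≤ ρ_j ≤ G_j + max(v_j, 0),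
one has P( Σ_j ρ_j ≥ (B/ε)k ) ≤ exp(−(ln 16 + 1)k). -/
theorem stmt18 :
    ∃ B : ℝ, 1 < B ∧
      ∀ (ε : ℝ), 0 < ε → ε ≤ 1 / 2 → ∀ (k : ℕ), 1 ≤ k →
        ∀ (v : Fin k → ℤ), (∑ j, (v j).natAbs) ≤ 2 * k →
          ∀ (Ω : Type) (_ : MeasurableSpace Ω) (μ : Measure Ω), IsProbabilityMeasure μ →
            ∀ (G ρ : Fin k → Ω → ℕ),
              (∀ j, Measurable (G j)) → (∀ j, Measurable (ρ j)) →
              iIndepFun (fun j => fun ω => (G j ω, ρ j ω)) μ →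
              (∀ j (l : ℕ), μ {ω | G j ω = l + 1} = ENNReal.ofReal (ε * (1 - ε) ^ l)) →
              (∀ j ω, G j ω ≤ ρ j ω ∧ ρ j ω ≤ G j ω + (v j).toNat) →
              μ {ω | (B / ε) * k ≤ ((∑ j, ρ j ω : ℕ) : ℝ)} ≤
                ENNReal.ofReal (Real.exp (-(Real.log 16 + 1) * k)) := by
  refine ⟨12, by norm_num, ?_⟩
  intro ε hε hε2 k _ v hv Ω _ μ _ G ρ hG _ hind hlaw hρ
  have hGm : ∀ j, Measurable fun ω ↦ (G j ω : ℝ) :=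
    fun j ↦ (measurable_of_countable _).comp (hG j)
  have hGind : iIndepFun (fun j ω ↦ (G j ω : ℝ)) μ :=
    hind.comp (fun _ p ↦ (p.1 : ℝ)) fun _ ↦ measurable_of_countable _
  have hchernoff := hGind.measureReal_sum_ge_le_of_lintegral_exp_le hGm (by positivity)
    (by norm_num) (fun j ↦ lintegral_exp_half_mul_le_four hε hε2 (hG j) (hlaw j)) (11 / ε * k)
  have hsub : {ω | (12 / ε) * k ≤ ((∑ j, ρ j ω : ℕ) : ℝ)} ⊆
      {ω | 11 / ε * k ≤ ∑ j, (G j ω : ℝ)} := by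
    intro ω (hω : (12 / ε) * k ≤ ((∑ j, ρ j ω : ℕ) : ℝ))
    have hsum : ((∑ j, ρ j ω : ℕ) : ℝ) ≤ ∑ j, (G j ω : ℝ) + 2 * k := by
      exact_mod_cast (Finset.univ.sum_le_sum_add_sum_natAbs fun j ↦ (hρ j ω).2).trans
        (Nat.add_le_add_left hv _)
    have hk : 2 * (k : ℝ) ≤ k / ε := by
      rw [le_div_iff₀ hε]; nlinarith [(Nat.cast_nonneg k : (0 : ℝ) ≤ k)]
    calc 11 / ε * k = 12 / ε * k - k / ε := by ring
      _ ≤ ∑ j, (G j ω : ℝ) := by linarith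
  rw [← ofReal_measureReal]
  gcongr
  calc μ.real {ω | (12 / ε) * k ≤ ((∑ j, ρ j ω : ℕ) : ℝ)}
      ≤ μ.real {ω | 11 / ε * k ≤ ∑ j, (G j ω : ℝ)} := measureReal_mono hsub
    _ ≤ Real.exp (-(ε / 2) * (11 / ε * k)) * 4 ^ k := by simpa using hchernoff
    _ = Real.exp (-(11 / 2) * k) * 4 ^ k := by congr 2; field_simp
    _ ≤ Real.exp (-(Real.log 16 + 1) * k) := Real.exp_neg_eleven_div_two_mul_mul_four_pow_le k
end
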